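/- arXiv:1810.00779 — 4 statements merged into one kernel-verified Lean document; each statement's English description precedes it below -/
import Mathlib

section
/- For a positive integer x, write x = x₀·x₁² with x₀ squarefree. Then the number of residues s modulo 2x satisfying s² ≡ 0 (mod 4x) equals x₁. -/
/-! Writing `4x = x₀ (2x₁)²`, the condition `4x ∣ s²` says exactly that `2x₀x₁ ∣ s`: the square
part `(2x₁)²` forces `2x₁ ∣ s`, and then the squarefree part `x₀` must divide `s / (2x₁)`.
Of the residues modulo `2x = 2x₀x₁ · x₁`, exactly `x₁` are multiples of `2x₀x₁`. -/

namespace Nat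

theorem squarefree_mul_sq_dvd_sq_iff {a b s : ℕ} (ha : Squarefree a) :
    a * b ^ 2 ∣ s ^ 2 ↔ a * b ∣ s := by
  refine ⟨fun h => ?_, fun h => (Dvd.intro a (by ring)).trans (pow_dvd_pow_of_dvd h 2)⟩
  rcases eq_or_ne b 0 with rfl | hb
  · simpa using h
  obtain ⟨t, rfl⟩ : b ∣ s :=
    (Nat.pow_dvd_pow_iff two_ne_zero).mp ((Dvd.intro_left a rfl).trans h)
  have hat : a ∣ t ^ 2 := by
    rw [mul_pow, mul_comm a] at h
    exact (mul_dvd_mul_iff_left (pow_ne_zero 2 hb)).mp h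
  rw [mul_comm a]
  exact mul_dvd_mul_left b ((ha.dvd_pow_iff_dvd two_ne_zero).mp hat)

theorem card_filter_dvd_range_mul {d : ℕ} (hd : 0 < d) (n : ℕ) :
    ((Finset.range (d * n)).filter (d ∣ ·)).card = n := by
  have hmultiples : (Finset.range (d * n)).filter (d ∣ ·) = (Finset.range n).image (d * ·) := by
    ext s
    simp only [Finset.mem_filter, Finset.mem_range, Finset.mem_image]
    constructor
    · rintro ⟨hlt, k, rfl⟩
      exact ⟨k, lt_of_mul_lt_mul_left hlt d.zero_le, rfl⟩
    · rintro ⟨k, hk, rfl⟩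
      exact ⟨(mul_lt_mul_iff_right₀ hd).mpr hk, dvd_mul_right d k⟩
  rw [hmultiples, Finset.card_image_of_injective _ (mul_right_injective₀ hd.ne'),
    Finset.card_range]

end Nat

theorem count_sqrt_zero_mod_general (x x₀ x₁ : ℕ) (hx₁ : 0 < x₁)
    (hsq : Squarefree x₀) (hdecomp : x = x₀ * x₁ ^ 2) :
    ((Finset.range (2 * x)).filter (fun s => 4 * x ∣ s ^ 2)).card = x₁ := by
  subst hdecomp
  have hd : 0 < 2 * x₀ * x₁ := by
    have := Nat.pos_of_ne_zero hsq.ne_zero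
    positivity
  have hdvd (s : ℕ) : 4 * (x₀ * x₁ ^ 2) ∣ s ^ 2 ↔ 2 * x₀ * x₁ ∣ s := by
    rw [show 4 * (x₀ * x₁ ^ 2) = x₀ * (2 * x₁) ^ 2 by ring,
      show 2 * x₀ * x₁ = x₀ * (2 * x₁) by ring]
    exact Nat.squarefree_mul_sq_dvd_sq_iff hsq
  simp_rw [hdvd, show 2 * (x₀ * x₁ ^ 2) = 2 * x₀ * x₁ * x₁ by ring]
  exact Nat.card_filter_dvd_range_mul hd x₁

theorem count_sqrt_zero_mod (x x₀ x₁ : ℕ) (hx : 0 < x) (hx₁ : 0 < x₁)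
    (hsq : Squarefree x₀) (hdecomp : x = x₀ * x₁ ^ 2) :
    ((Finset.range (2 * x)).filter (fun s => 4 * x ∣ s ^ 2)).card = x₁ :=
  count_sqrt_zero_mod_general x x₀ x₁ hx₁ hsq hdecomp
end

section
/- For a positive integer x, the number of residues s modulo 2x with s² ≡ 0 (mod 4x) equals the sum over f with f² ∣ x of f·|μ(x/f²)|, where μ is the Möbius function. -/
/-!
Write `x = b² k` with `k` squarefree. Then `4x ∣ s²` iff `2bk ∣ s`, so exactly `b` of the residues
modulo `2x = 2bk · b` qualify. On the other side, `μ(x / f²) ≠ 0` forces `x = f² m` with `m`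
squarefree, and the squarefree decomposition is unique, so only the term `f = b` survives, and it
equals `b`.
-/

open Finset

theorem Nat.card_filter_dvd_range_mul_s1 {d : ℕ} (hd : d ≠ 0) (m : ℕ) :
    #{s ∈ range (d * m) | d ∣ s} = m := by
  have : {s ∈ range (d * m) | d ∣ s} = (range m).image (d * ·) := by
    ext s
    simp only [mem_filter, mem_range, mem_image]
    constructor
    · rintro ⟨hs, i, rfl⟩
      exact ⟨i, Nat.lt_of_mul_lt_mul_left hs, rfl⟩
    · rintro ⟨i, hi, rfl⟩
      exact ⟨Nat.mul_lt_mul_of_pos_left hi (Nat.pos_of_ne_zero hd), dvd_mul_right d i⟩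
  rw [this, Finset.card_image_of_injective _ (mul_right_injective₀ hd), card_range]

theorem Squarefree.sq_mul_dvd_sq_iff {k : ℕ} (hk : Squarefree k) (b s : ℕ) :
    b ^ 2 * k ∣ s ^ 2 ↔ b * k ∣ s := by
  constructor
  · intro h
    obtain ⟨t, rfl⟩ : b ∣ s := (Nat.pow_dvd_pow_iff two_ne_zero).1 (dvd_of_mul_right_dvd h)
    rcases eq_or_ne b 0 with rfl | hb
    · simp
    have hkt : k ∣ t ^ 2 := by
      rw [mul_pow] at h
      exact (mul_dvd_mul_iff_left (pow_ne_zero 2 hb)).1 h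
    exact mul_dvd_mul_left b ((hk.dvd_pow_iff_dvd two_ne_zero).1 hkt)
  · rintro ⟨t, rfl⟩
    exact ⟨k * t ^ 2, by ring⟩

theorem Squarefree.dvd_of_sq_dvd_sq_mul {k f b : ℕ} (hk : Squarefree k) (h : f ^ 2 ∣ b ^ 2 * k) :
    f ∣ b := by
  rcases Nat.eq_zero_or_pos (f.gcd b) with hgcd | hgcd
  · simp [(Nat.gcd_eq_zero_iff.1 hgcd).2]
  obtain ⟨g, f', b', hg, hcop, rfl, rfl⟩ := Nat.exists_coprime' hgcd
  have hf'k : f' ^ 2 ∣ k := by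
    have : f' ^ 2 ∣ b' ^ 2 * k := by
      rw [mul_pow, mul_pow, mul_right_comm, mul_dvd_mul_iff_right (pow_pos hg 2).ne'] at h
      exact h
    exact (hcop.pow 2 2).dvd_of_dvd_mul_left this
  have hf' : f' = 1 := Nat.isUnit_iff.1 (hk f' (sq f' ▸ hf'k))
  simp [hf']

theorem Squarefree.eq_of_sq_mul_eq_sq_mul {k m b f : ℕ} (hk : Squarefree k) (hm : Squarefree m)
    (h : f ^ 2 * m = b ^ 2 * k) : f = b :=
  Nat.dvd_antisymm (hk.dvd_of_sq_dvd_sq_mul (h ▸ dvd_mul_right _ _))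
    (hm.dvd_of_sq_dvd_sq_mul (h ▸ dvd_mul_right _ _))

theorem count_sqrt_zero_mod_eq_sum_general (x : ℕ) :
    (((Finset.range (2 * x)).filter (fun s => 4 * x ∣ s ^ 2)).card : ℤ) =
      ∑ f ∈ (Finset.range (x + 1)).filter (fun f => f ^ 2 ∣ x),
        (f : ℤ) * |ArithmeticFunction.moebius (x / f ^ 2)| := by
  obtain ⟨k, b, rfl, hk⟩ := Nat.sq_mul_squarefree x
  rcases eq_or_ne b 0 with rfl | hb
  · simp
  have hcount : #{s ∈ range (2 * (b ^ 2 * k)) | 4 * (b ^ 2 * k) ∣ s ^ 2} = b := by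
    have hrange : 2 * (b ^ 2 * k) = 2 * b * k * b := by ring
    have hdvd : 4 * (b ^ 2 * k) = (2 * b) ^ 2 * k := by ring
    simp_rw [hrange, hdvd, hk.sq_mul_dvd_sq_iff]
    exact Nat.card_filter_dvd_range_mul_s1 (by simp [hb, hk.ne_zero]) b
  have hb_le : b ≤ b ^ 2 * k :=
    (Nat.le_self_pow two_ne_zero b).trans (Nat.le_mul_of_pos_right _ hk.ne_zero.bot_lt)
  have hb_mem : b ∈ {f ∈ range (b ^ 2 * k + 1) | f ^ 2 ∣ b ^ 2 * k} :=
    mem_filter.2 ⟨mem_range.2 (Nat.lt_succ_of_le hb_le), dvd_mul_right _ _⟩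
  rw [hcount, Finset.sum_eq_single_of_mem b hb_mem]
  · rw [Nat.mul_div_cancel_left _ (by positivity),
      ArithmeticFunction.abs_moebius_eq_one_of_squarefree hk, mul_one]
  · rintro f hf hfb
    obtain ⟨-, m, hm⟩ := mem_filter.1 hf
    have hf0 : f ≠ 0 := by rintro rfl; simp [hb, hk.ne_zero] at hm
    have hm_sf : ¬Squarefree m := fun hm_sf => hfb (hk.eq_of_sq_mul_eq_sq_mul hm_sf hm.symm)
    rw [hm, Nat.mul_div_cancel_left _ (by positivity),
      ArithmeticFunction.moebius_eq_zero_of_not_squarefree hm_sf, abs_zero, mul_zero]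

theorem count_sqrt_zero_mod_eq_sum (x : ℕ) (hx : 0 < x) :
    (((Finset.range (2 * x)).filter (fun s => 4 * x ∣ s ^ 2)).card : ℤ) =
      ∑ f ∈ (Finset.range (x + 1)).filter (fun f => f ^ 2 ∣ x),
        (f : ℤ) * |ArithmeticFunction.moebius (x / f ^ 2)| :=
  count_sqrt_zero_mod_eq_sum_general x
end

section
/- Define g_k(m) := Σ_{y² ∣ m} μ(y)·σ_{k-1}(m/y²), where σ_{k-1}(n) = Σ_{d ∣ n} d^{k-1} and μ is the Möbius function. Then for every positive integer m and integer k ≥ 2, g_k(m) = m^{k-1} · ∏_{p ∣ m, p prime} (1 + p^{-(k-1)}). -/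
/-!
Both sides are multiplicative in `m`. The left side is the Dirichlet convolution of `σ_{k-1}`
with the function `y² ↦ μ(y)` supported on squares, so at a prime power `p^e` it equals
`σ_{k-1}(p^e) - σ_{k-1}(p^{e-2}) = p^{e(k-1)} + p^{(e-1)(k-1)}`, which is also the value of the
right side.
-/

/-- `g_k(m) = Σ_{y² ∣ m} μ(y)·σ_{k-1}(m/y²)` -/
noncomputable def gk (k m : ℕ) : ℤ :=
  ∑ y ∈ (Finset.range (m + 1)).filter (fun y => y ^ 2 ∣ m),
    ArithmeticFunction.moebius y * (ArithmeticFunction.sigma (k - 1) (m / y ^ 2) : ℤ)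

open Finset
open scoped ArithmeticFunction.Moebius ArithmeticFunction.sigma

theorem Nat.Coprime.exists_eq_sq_of_mul_eq_sq {a b c : ℕ} (hab : a.Coprime b)
    (h : a * b = c ^ 2) : ∃ y, a = y ^ 2 :=
  exists_eq_pow_of_mul_eq_pow (Nat.isUnit_iff.mpr hab) h

namespace ArithmeticFunction

variable {R : Type*}

def onSquares [Zero R] (f : ArithmeticFunction R) : ArithmeticFunction R :=
  ⟨fun n => if Nat.sqrt n ^ 2 = n then f (Nat.sqrt n) else 0, by simp⟩

section Zero

variable [Zero R] (f : ArithmeticFunction R)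

theorem onSquares_apply_sq (y : ℕ) : f.onSquares (y ^ 2) = f y := by
  simp [onSquares, Nat.sqrt_eq']

theorem onSquares_apply_of_not_sq {n : ℕ} (hn : ∀ y, n ≠ y ^ 2) : f.onSquares n = 0 :=
  if_neg fun h => hn _ h.symm

theorem onSquares_apply_prime_pow {p : ℕ} (hp : p.Prime) (i : ℕ) :
    f.onSquares (p ^ i) = if Even i then f (p ^ (i / 2)) else 0 := by
  split_ifs with hi
  · obtain ⟨j, rfl⟩ := hi
    rw [← two_mul, Nat.mul_div_cancel_left _ two_pos, pow_mul', onSquares_apply_sq]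
  · refine f.onSquares_apply_of_not_sq fun y hy => hi ?_
    obtain ⟨j, -, rfl⟩ := (Nat.dvd_prime_pow hp).mp (Dvd.intro_left _ (sq y ▸ hy.symm))
    exact ⟨j, Nat.pow_right_injective hp.two_le (hy.trans (by ring))⟩

end Zero

theorem IsMultiplicative.onSquares [MonoidWithZero R] {f : ArithmeticFunction R}
    (hf : f.IsMultiplicative) : f.onSquares.IsMultiplicative := by
  refine ⟨(f.onSquares_apply_sq 1).trans hf.map_one, fun {m n} hmn => ?_⟩
  by_cases hm : ∃ a, m = a ^ 2
  · by_cases hn : ∃ b, n = b ^ 2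
    · obtain ⟨a, rfl⟩ := hm
      obtain ⟨b, rfl⟩ := hn
      rw [← mul_pow, onSquares_apply_sq, onSquares_apply_sq, onSquares_apply_sq,
        hf.map_mul_of_coprime ((Nat.coprime_pow_left_iff two_pos ..).mp
          ((Nat.coprime_pow_right_iff two_pos ..).mp hmn))]
    · rw [f.onSquares_apply_of_not_sq (n := n) (not_exists.mp hn), mul_zero,
        f.onSquares_apply_of_not_sq fun c hc =>
          hn (hmn.symm.exists_eq_sq_of_mul_eq_sq ((mul_comm n m).trans hc))]
  · rw [f.onSquares_apply_of_not_sq (n := m) (not_exists.mp hm), zero_mul,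
      f.onSquares_apply_of_not_sq fun c hc => hm (hmn.exists_eq_sq_of_mul_eq_sq hc)]

theorem onSquares_mul_apply [Semiring R] (f g : ArithmeticFunction R) {m : ℕ} (hm : m ≠ 0) :
    (f.onSquares * g) m = ∑ y ∈ (range (m + 1)).filter (· ^ 2 ∣ m), f y * g (m / y ^ 2) := by
  rw [mul_apply, Nat.sum_divisorsAntidiagonal (fun a b => f.onSquares a * g b)]
  symm
  calc _ = ∑ y ∈ (range (m + 1)).filter (· ^ 2 ∣ m), f.onSquares (y ^ 2) * g (m / y ^ 2) := by
        simp only [onSquares_apply_sq]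
    _ = ∑ d ∈ ((range (m + 1)).filter (· ^ 2 ∣ m)).image (· ^ 2),
          f.onSquares d * g (m / d) :=
        (sum_image (f := fun d => f.onSquares d * g (m / d)) fun _ _ _ _ h =>
          Nat.pow_left_injective two_ne_zero h).symm
    _ = _ := by
      refine sum_subset (fun d hd => ?_) fun d hd hd' => ?_
      · obtain ⟨y, hy, rfl⟩ := mem_image.mp hd
        exact Nat.mem_divisors.mpr ⟨(mem_filter.mp hy).2, hm⟩
      · rw [f.onSquares_apply_of_not_sq, zero_mul]
        rintro y rfl
        refine hd' (mem_image.mpr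
          ⟨y, mem_filter.mpr ⟨mem_range.mpr ?_, Nat.dvd_of_mem_divisors hd⟩, rfl⟩)
        exact Nat.lt_succ_of_le ((Nat.le_self_pow two_ne_zero y).trans (Nat.divisor_le hd))

theorem moebius_onSquares_apply_prime_pow {p : ℕ} (hp : p.Prime) (i : ℕ) :
    (μ : ArithmeticFunction ℤ).onSquares (p ^ i) =
      if i = 0 then 1 else if i = 2 then -1 else 0 := by
  rw [onSquares_apply_prime_pow _ hp]
  rcases Nat.even_or_odd' i with ⟨j, rfl | rfl⟩
  · rcases eq_or_ne j 0 with rfl | hj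
    · simp
    · simp [hj, moebius_apply_prime_pow hp, Nat.mul_div_cancel_left _ two_pos]
  · simp [Nat.not_even_iff_odd.mpr (odd_two_mul_add_one j)]

theorem moebius_onSquares_mul_sigma_apply_prime_pow (K : ℕ) {p e : ℕ} (hp : p.Prime)
    (he : e ≠ 0) :
    ((μ : ArithmeticFunction ℤ).onSquares * σ K) (p ^ e) = p ^ (e * K) + p ^ ((e - 1) * K) := by
  let f : ArithmeticFunction ℤ := (μ : ArithmeticFunction ℤ).onSquares
  let g : ArithmeticFunction ℤ := ↑(σ K)
  rw [mul_apply, Nat.sum_divisorsAntidiagonal (f · * g ·), Nat.sum_divisors_prime_pow hp]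
  have hterm : ∀ i ∈ range (e + 1), f (p ^ i) * g (p ^ e / p ^ i) =
      (if i = 0 then 1 else if i = 2 then -1 else 0) *
        ∑ l ∈ range (e - i + 1), (p : ℤ) ^ (l * K) := by
    intro i hi
    rw [moebius_onSquares_apply_prime_pow hp, natCoe_apply,
      Nat.pow_div (Nat.lt_succ_iff.mp (mem_range.mp hi)) hp.pos, sigma_apply_prime_pow hp]
    push_cast
    rfl
  rw [sum_congr rfl hterm]
  rcases e with _ | _ | j
  · contradiction
  · simp [sum_range_succ, add_comm]
  · rw [sum_range_succ', sum_range_succ', sum_range_succ']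
    simp [sum_range_succ]
    ring

theorem moebius_onSquares_mul_sigma_eq (K : ℕ) :
    (((μ : ArithmeticFunction ℤ).onSquares * σ K : ArithmeticFunction ℤ) : ArithmeticFunction ℚ) =
      (pow K : ArithmeticFunction ℚ).pmul
        (prodPrimeFactors fun p => 1 + (p : ℚ) ^ (-(K : ℤ))) := by
  have hF := (isMultiplicative_moebius.onSquares.mul
    (isMultiplicative_sigma (k := K)).natCast).intCast (R := ℚ)
  have hG := (isMultiplicative_pow (k := K)).natCast.pmul
    (IsMultiplicative.prodPrimeFactors fun p => 1 + (p : ℚ) ^ (-(K : ℤ)))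
  refine (IsMultiplicative.eq_iff_eq_on_prime_powers _ hF _ hG).2 fun p e hp => ?_
  rcases eq_or_ne e 0 with rfl | he
  · simp only [pow_zero, hF.map_one, hG.map_one]
  have hp0 : (p : ℚ) ≠ 0 := Nat.cast_ne_zero.mpr hp.ne_zero
  rw [intCoe_apply, moebius_onSquares_mul_sigma_apply_prime_pow K hp he, pmul_apply, natCoe_apply,
    pow_apply, if_neg (by simp [hp.ne_zero]), prodPrimeFactors_apply (pow_ne_zero e hp.ne_zero),
    Nat.primeFactors_prime_pow he hp, prod_singleton, zpow_neg, zpow_natCast]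
  obtain ⟨e, rfl⟩ := Nat.exists_eq_add_one_of_ne_zero he
  field_simp
  push_cast
  ring

end ArithmeticFunction

open ArithmeticFunction

theorem gk_eq_moebius_onSquares_mul_sigma (k : ℕ) {m : ℕ} (hm : m ≠ 0) :
    gk k m = ((μ : ArithmeticFunction ℤ).onSquares * σ (k - 1)) m := by
  simp only [onSquares_mul_apply _ _ hm, natCoe_apply, gk]

theorem gk_eq_prod (k m : ℕ) (hk : 2 ≤ k) (hm : 0 < m) :
    (gk k m : ℚ) =
      (m : ℚ) ^ (k - 1) *
        ∏ p ∈ m.primeFactors, (1 + (p : ℚ) ^ (-((k : ℤ) - 1))) := by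
  obtain ⟨K, rfl⟩ : ∃ K, k = K + 1 := ⟨k - 1, by omega⟩
  have hK : -(((K + 1 : ℕ) : ℤ) - 1) = -(K : ℤ) := by push_cast; ring
  rw [gk_eq_moebius_onSquares_mul_sigma _ hm.ne', Nat.add_sub_cancel, hK, ← intCoe_apply,
    moebius_onSquares_mul_sigma_eq, pmul_apply, natCoe_apply, pow_apply, if_neg (by omega),
    prodPrimeFactors_apply hm.ne', Nat.cast_pow]
end

section
/- Let R be a 2×2 half-integral positive definite symmetric matrix (diagonal entries in ℤ, off-diagonal entries in ½ℤ). The number of 2×2 half-integral symmetric matrices L with both R − L and R + L positive semidefinite is at most C·det(R)^{3/2} for an absolute constant C. -/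
/-- A real symmetric 2×2 matrix is half-integral if its diagonal entries are integers
and its off-diagonal entry is a half-integer. -/
def IsHalfIntegral (M : Matrix (Fin 2) (Fin 2) ℝ) : Prop :=
  M.IsSymm ∧ (∃ a : ℤ, M 0 0 = a) ∧ (∃ a : ℤ, M 1 1 = a) ∧ (∃ a : ℤ, M 0 1 = a / 2)

/-!
Both the set of dominated `L` and `det R` are invariant under the simultaneous congruence
`R ↦ VᵀRV`, `L ↦ VᵀLV` by `V ∈ GL₂(ℤ)`, so by Gauss reduction we may assume
`R = !![a, t/2; t/2, c]` with `|t| ≤ a ≤ c`, whence `ac ≤ 4 det R / 3`. A dominated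
`L = !![x, y/2; y/2, z]` has `|x| ≤ a`, `|z| ≤ c` and `y² ≤ 4ac`, so there are at most
`(2a+1)(4√(ac)+1)(2c+1) ≤ 45 (ac)^{3/2}` of them.
-/

open Matrix

section DominatedEntries

variable {n : Type*} {R L : Matrix n n ℝ}

lemma abs_diag_le_of_posSemidef_sub_add (hsub : (R - L).PosSemidef)
    (hadd : (R + L).PosSemidef) (i : n) : |L i i| ≤ R i i := by
  have h₁ : 0 ≤ (R - L) i i := hsub.diag_nonneg
  have h₂ : 0 ≤ (R + L) i i := hadd.diag_nonneg
  rw [Matrix.sub_apply] at h₁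
  rw [Matrix.add_apply] at h₂
  exact abs_le.2 ⟨by linarith, by linarith⟩

variable [Fintype n] [DecidableEq n]

lemma Matrix.PosSemidef.quadForm_single_add_nonneg {M : Matrix n n ℝ} (hM : M.PosSemidef)
    (i j : n) (x y : ℝ) :
    0 ≤ x ^ 2 * M i i + x * y * (M i j + M j i) + y ^ 2 * M j j := by
  have h := hM.dotProduct_mulVec_nonneg (Pi.single i x + Pi.single j y)
  simp only [star_trivial, mulVec_add, mulVec_single, op_smul_eq_smul, dotProduct_add,
    dotProduct_smul, add_dotProduct, single_dotProduct, col_apply, smul_eq_mul] at h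
  linarith

lemma sq_apply_le_of_posSemidef_sub_add (hsub : (R - L).PosSemidef)
    (hadd : (R + L).PosSemidef) (i j : n) : L i j ^ 2 ≤ R i i * R j j := by
  have hsymm : L j i = L i j := by
    have h₁ := hsub.1.apply i j
    have h₂ := hadd.1.apply i j
    simp only [star_trivial, Matrix.sub_apply, Matrix.add_apply] at h₁ h₂
    linarith
  -- add the quadratic forms of `R + L` at `(x, 1)` and of `R - L` at `(x, -1)`
  have hq : ∀ x : ℝ, 0 ≤ R i i * (x * x) + 2 * L i j * x + R j j := by
    intro x
    have h₁ := hadd.quadForm_single_add_nonneg i j x 1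
    have h₂ := hsub.quadForm_single_add_nonneg i j x (-1)
    simp only [Matrix.sub_apply, Matrix.add_apply, hsymm] at h₁ h₂
    nlinarith
  have := discrim_le_zero hq
  rw [discrim] at this
  linarith

end DominatedEntries

noncomputable def halfInt (x y z : ℤ) : Matrix (Fin 2) (Fin 2) ℝ :=
  !![(x : ℝ), y / 2; y / 2, z]

lemma isHalfIntegral_iff {L : Matrix (Fin 2) (Fin 2) ℝ} :
    IsHalfIntegral L ↔ ∃ x y z : ℤ, L = halfInt x y z := by
  constructor
  · rintro ⟨hL, ⟨x, hx⟩, ⟨z, hz⟩, ⟨y, hy⟩⟩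
    refine ⟨x, y, z, ?_⟩
    have h10 : L 1 0 = L 0 1 := hL.apply 0 1
    ext i j
    fin_cases i <;> fin_cases j <;> simp [halfInt, hx, hy, hz, h10]
  · rintro ⟨x, y, z, rfl⟩
    refine ⟨?_, ⟨x, rfl⟩, ⟨z, rfl⟩, ⟨y, rfl⟩⟩
    ext i j
    fin_cases i <;> fin_cases j <;> rfl

lemma transpose_map_mul_halfInt_mul_map (V : Matrix (Fin 2) (Fin 2) ℤ) (x y z : ℤ) :
    (V.map Int.cast)ᵀ * halfInt x y z * V.map Int.cast =
      halfInt (x * V 0 0 ^ 2 + y * V 0 0 * V 1 0 + z * V 1 0 ^ 2)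
        (2 * x * V 0 0 * V 0 1 + y * (V 0 0 * V 1 1 + V 0 1 * V 1 0) + 2 * z * V 1 0 * V 1 1)
        (x * V 0 1 ^ 2 + y * V 0 1 * V 1 1 + z * V 1 1 ^ 2) := by
  ext i j
  fin_cases i <;> fin_cases j <;>
    · simp only [halfInt, Fin.zero_eta, Fin.isValue, Fin.mk_one, mul_apply, transpose_apply,
        map_apply, of_apply, cons_val', cons_val_fin_one, Fin.sum_univ_two, cons_val_zero,
        cons_val_one]
      push_cast
      ring

lemma IsHalfIntegral.transpose_map_mul_mul_map {L : Matrix (Fin 2) (Fin 2) ℝ}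
    (hL : IsHalfIntegral L) (V : Matrix (Fin 2) (Fin 2) ℤ) :
    IsHalfIntegral ((V.map Int.cast)ᵀ * L * V.map Int.cast) := by
  obtain ⟨x, y, z, rfl⟩ := isHalfIntegral_iff.1 hL
  rw [transpose_map_mul_halfInt_mul_map]
  exact isHalfIntegral_iff.2 ⟨_, _, _, rfl⟩

section Congruence

variable {n : Type*} [Fintype n] [DecidableEq n]

lemma isUnit_map_intCast {V : Matrix n n ℤ} (hV : IsUnit V.det) :
    IsUnit (V.map Int.cast : Matrix n n ℝ) := by
  rw [isUnit_iff_isUnit_det, ← Int.cast_det]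
  exact hV.map (Int.castRingHom ℝ)

lemma injective_transpose_map_mul_mul_map {V : Matrix n n ℤ} (hV : IsUnit V.det) :
    Function.Injective fun L : Matrix n n ℝ => (V.map Int.cast)ᵀ * L * V.map Int.cast := by
  have hU := isUnit_map_intCast hV
  intro L L' h
  exact ((isUnit_transpose _).2 hU).mul_left_cancel (hU.mul_right_cancel h)

def IntCongruent (R B : Matrix n n ℝ) : Prop :=
  ∃ V : Matrix n n ℤ, IsUnit V.det ∧ B = (V.map Int.cast)ᵀ * R * V.map Int.cast

namespace IntCongruent

variable {R B B' : Matrix n n ℝ}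

lemma refl (R : Matrix n n ℝ) : IntCongruent R R := ⟨1, by simp, by simp⟩

lemma trans (h : IntCongruent R B) (h' : IntCongruent B B') : IntCongruent R B' := by
  obtain ⟨V, hV, rfl⟩ := h
  obtain ⟨W, hW, rfl⟩ := h'
  refine ⟨V * W, by simpa [det_mul] using hV.mul hW, ?_⟩
  have hmap : (V * W).map (Int.cast : ℤ → ℝ) = V.map Int.cast * W.map Int.cast :=
    Matrix.map_mul (f := Int.castRingHom ℝ)
  simp only [hmap, transpose_mul, Matrix.mul_assoc]

lemma det_eq (h : IntCongruent R B) : B.det = R.det := by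
  obtain ⟨V, hV, rfl⟩ := h
  have hV2 : ((V.map Int.cast : Matrix n n ℝ).det) ^ 2 = 1 := by
    rw [← Int.cast_det]; exact_mod_cast Int.isUnit_sq hV
  rw [det_mul, det_mul, det_transpose]
  linear_combination R.det * hV2

lemma posDef (h : IntCongruent R B) (hR : R.PosDef) : B.PosDef := by
  obtain ⟨V, hV, rfl⟩ := h
  simpa using hR.conjTranspose_mul_mul_same
    (mulVec_injective_iff_isUnit.2 (isUnit_map_intCast hV))

end IntCongruent

end Congruence

def dominatedSet (R : Matrix (Fin 2) (Fin 2) ℝ) : Set (Matrix (Fin 2) (Fin 2) ℝ) :=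
  {L | IsHalfIntegral L ∧ (R - L).PosSemidef ∧ (R + L).PosSemidef}

lemma IntCongruent.ncard_dominatedSet_le {R B : Matrix (Fin 2) (Fin 2) ℝ}
    (h : IntCongruent R B) (hfin : (dominatedSet B).Finite) :
    (dominatedSet R).ncard ≤ (dominatedSet B).ncard := by
  obtain ⟨V, hV, rfl⟩ := h
  set U : Matrix (Fin 2) (Fin 2) ℝ := V.map Int.cast
  refine Set.ncard_le_ncard_of_injOn (fun L => Uᵀ * L * U) ?_
    (injective_transpose_map_mul_mul_map hV).injOn hfin
  rintro L ⟨hL, hsub, hadd⟩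
  refine ⟨hL.transpose_map_mul_mul_map V, ?_, ?_⟩
  · simpa [Matrix.mul_sub, Matrix.sub_mul] using hsub.conjTranspose_mul_mul_same U
  · simpa [Matrix.mul_add, Matrix.add_mul] using hadd.conjTranspose_mul_mul_same U

noncomputable def intsAbsLe (r : ℝ) : Finset ℤ := Finset.Icc (-⌊r⌋) ⌊r⌋

lemma mem_intsAbsLe {r : ℝ} {x : ℤ} : x ∈ intsAbsLe r ↔ |(x : ℝ)| ≤ r := by
  rw [intsAbsLe, Finset.mem_Icc, abs_le, neg_le, Int.le_floor, neg_le, Int.le_floor]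
  push_cast
  rfl

lemma card_intsAbsLe_le {r : ℝ} (hr : 0 ≤ r) : ((intsAbsLe r).card : ℝ) ≤ 2 * r + 1 := by
  have hfloor : 0 ≤ ⌊r⌋ := Int.floor_nonneg.2 hr
  have hcard : ((intsAbsLe r).card : ℤ) = 2 * ⌊r⌋ + 1 := by
    rw [intsAbsLe, Int.card_Icc_of_le _ _ (by omega)]
    ring
  have : ((intsAbsLe r).card : ℝ) = 2 * ⌊r⌋ + 1 := by exact_mod_cast hcard
  linarith [Int.floor_le r]

lemma dominatedSet_subset_image (R : Matrix (Fin 2) (Fin 2) ℝ) :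
    dominatedSet R ⊆ (fun v : ℤ × ℤ × ℤ => halfInt v.1 v.2.1 v.2.2) ''
      ↑(intsAbsLe (R 0 0) ×ˢ intsAbsLe (2 * √(R 0 0 * R 1 1)) ×ˢ intsAbsLe (R 1 1)) := by
  rintro L ⟨hL, hsub, hadd⟩
  obtain ⟨x, y, z, rfl⟩ := isHalfIntegral_iff.1 hL
  have hx := abs_diag_le_of_posSemidef_sub_add hsub hadd 0
  have hz := abs_diag_le_of_posSemidef_sub_add hsub hadd 1
  have hy := Real.abs_le_sqrt (sq_apply_le_of_posSemidef_sub_add hsub hadd 0 1)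
  simp only [halfInt, of_apply, cons_val', cons_val_zero, cons_val_one, empty_val',
    cons_val_fin_one, abs_div, abs_two] at hx hy hz
  refine ⟨(x, y, z), ?_, rfl⟩
  simp only [Finset.coe_product, Set.mem_prod, Finset.mem_coe, mem_intsAbsLe]
  exact ⟨hx, by linarith, hz⟩

lemma dominatedSet_finite (R : Matrix (Fin 2) (Fin 2) ℝ) : (dominatedSet R).Finite :=
  ((Finset.finite_toSet _).image _).subset (dominatedSet_subset_image R)

lemma ncard_dominatedSet_le (R : Matrix (Fin 2) (Fin 2) ℝ) (h₀ : 0 ≤ R 0 0)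
    (h₁ : 0 ≤ R 1 1) :
    ((dominatedSet R).ncard : ℝ) ≤
      (2 * R 0 0 + 1) * (4 * √(R 0 0 * R 1 1) + 1) * (2 * R 1 1 + 1) := by
  have hcard := (Set.ncard_le_ncard (dominatedSet_subset_image R)
    ((Finset.finite_toSet _).image _)).trans (Set.ncard_image_le (Finset.finite_toSet _))
  rw [Set.ncard_coe_finset, Finset.card_product, Finset.card_product] at hcard
  have hx := card_intsAbsLe_le h₀
  have hy := card_intsAbsLe_le (by positivity : 0 ≤ 2 * √(R 0 0 * R 1 1))
  have hz := card_intsAbsLe_le h₁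
  calc ((dominatedSet R).ncard : ℝ)
      ≤ (intsAbsLe (R 0 0)).card * ((intsAbsLe (2 * √(R 0 0 * R 1 1))).card *
          (intsAbsLe (R 1 1)).card) := by exact_mod_cast hcard
    _ ≤ (2 * R 0 0 + 1) * ((2 * (2 * √(R 0 0 * R 1 1)) + 1) * (2 * R 1 1 + 1)) := by
        gcongr
    _ = _ := by ring

lemma IntCongruent.halfInt_shear (x y z k : ℤ) :
    IntCongruent (halfInt x y z) (halfInt x (y + 2 * k * x) (z + k * y + k ^ 2 * x)) := by
  refine ⟨!![1, k; 0, 1], by simp, ?_⟩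
  rw [transpose_map_mul_halfInt_mul_map]
  congr 1 <;>
    simp only [Fin.isValue, of_apply, cons_val', cons_val_zero, cons_val_one, cons_val_fin_one] <;>
    ring

lemma IntCongruent.halfInt_swap (x y z : ℤ) : IntCongruent (halfInt x y z) (halfInt z y x) := by
  refine ⟨!![0, 1; 1, 0], by simp, ?_⟩
  rw [transpose_map_mul_halfInt_mul_map]
  congr 1 <;> simp

lemma exists_abs_add_two_mul_le (y : ℤ) {x : ℤ} (hx : 0 < x) :
    ∃ k : ℤ, |y + 2 * k * x| ≤ x := by
  refine ⟨-((y + x) / (2 * x)), abs_le.2 ?_⟩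
  have h₁ := Int.emod_nonneg (y + x) (by omega : 2 * x ≠ 0)
  have h₂ := Int.emod_lt_of_pos (y + x) (by omega : 0 < 2 * x)
  have h₃ := Int.mul_ediv_add_emod (y + x) (2 * x)
  constructor <;> linarith

theorem exists_intCongruent_reduced {R : Matrix (Fin 2) (Fin 2) ℝ} (hR : IsHalfIntegral R)
    (hpd : R.PosDef) :
    ∃ x y z : ℤ, IntCongruent R (halfInt x y z) ∧ |y| ≤ x ∧ x ≤ z := by
  classical
  have hpos : ∀ {x y z : ℤ}, IntCongruent R (halfInt x y z) → 0 < x := fun h => by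
    simpa [halfInt] using (h.posDef hpd).diag_pos (i := 0)
  have hex : ∃ m : ℕ, ∃ y z : ℤ, IntCongruent R (halfInt m y z) := by
    obtain ⟨x, y, z, rfl⟩ := isHalfIntegral_iff.1 hR
    refine ⟨x.toNat, y, z, ?_⟩
    rw [Int.toNat_of_nonneg (hpos (.refl _)).le]
    exact .refl _
  -- take a form in the class with least top-left entry; a shear makes `|y| ≤ x`,
  -- and the swap shows `x ≤ z` by minimality
  obtain ⟨y, z, hmin⟩ := Nat.find_spec hex
  obtain ⟨k, hk⟩ := exists_abs_add_two_mul_le y (hpos hmin)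
  have hshear := hmin.trans (.halfInt_shear _ y z k)
  refine ⟨_, _, _, hshear, hk, ?_⟩
  have hswap := hshear.trans (.halfInt_swap _ _ _)
  have hle := Nat.find_min' hex
    ⟨_, _, (Int.toNat_of_nonneg (hpos hswap).le).symm ▸ hswap⟩
  have := hpos hswap
  omega

lemma det_halfInt (x y z : ℤ) : (halfInt x y z).det = x * z - (y : ℝ) ^ 2 / 4 := by
  rw [halfInt, det_fin_two_of]
  ring

lemma rpow_three_halves {D : ℝ} (hD : 0 ≤ D) : D ^ ((3 : ℝ) / 2) = √D ^ 3 := by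
  rw [Real.sqrt_eq_rpow, ← Real.rpow_natCast, ← Real.rpow_mul hD]
  norm_num

lemma box_le_det_rpow_of_reduced {x y z : ℤ} (hyx : |y| ≤ x) (hxz : x ≤ z)
    (hdet : 0 < (halfInt x y z).det) :
    (2 * x + 1) * (4 * √(x * z) + 1) * (2 * z + 1) ≤
      72 * (halfInt x y z).det ^ ((3 : ℝ) / 2) := by
  rw [det_halfInt] at hdet ⊢
  set D : ℝ := x * z - (y : ℝ) ^ 2 / 4
  have hx : 1 ≤ x := by
    obtain hx | rfl := ((abs_nonneg y).trans hyx).lt_or_eq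
    · exact hx
    · obtain rfl : y = 0 := abs_nonpos_iff.1 hyx
      simp [D] at hdet
  have hxR : (1 : ℝ) ≤ x := by exact_mod_cast hx
  have hzR : (x : ℝ) ≤ z := by exact_mod_cast hxz
  have hyR : (y : ℝ) ^ 2 ≤ (x : ℝ) ^ 2 := by
    rw [← sq_abs]; exact_mod_cast pow_le_pow_left₀ (abs_nonneg y) hyx 2
  set s := √((x : ℝ) * z)
  set d := √D
  have hs2 : s ^ 2 = x * z := Real.sq_sqrt (by nlinarith)
  have hd2 : d ^ 2 = D := Real.sq_sqrt hdet.le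
  have hs1 : 1 ≤ s := Real.one_le_sqrt.2 (by nlinarith)
  have hd0 : 0 ≤ d := Real.sqrt_nonneg D
  -- `y² ≤ x² ≤ xz` gives `xz ≤ 4D/3`, and `(7/6)² ≥ 4/3`
  have hsd : s ≤ 7 / 6 * d := by
    have hx2 : (x : ℝ) ^ 2 ≤ x * z := by nlinarith
    have hD : D = x * z - (y : ℝ) ^ 2 / 4 := rfl
    refine (pow_le_pow_iff_left₀ (by linarith) (by positivity) two_ne_zero).1 ?_
    rw [mul_pow, hs2, hd2]
    linarith
  calc (2 * x + 1) * (4 * s + 1) * (2 * z + 1) ≤ (3 * x) * (5 * s) * (3 * z) := by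
        gcongr <;> linarith
    _ = 45 * s ^ 3 := by rw [pow_succ, hs2]; ring
    _ ≤ 45 * (7 / 6 * d) ^ 3 := by gcongr
    _ ≤ 72 * d ^ 3 := by nlinarith [pow_nonneg hd0 3]
    _ = 72 * D ^ ((3 : ℝ) / 2) := by rw [rpow_three_halves hdet.le]

theorem count_dominated_halfintegral :
    ∃ C : ℝ, 0 < C ∧ ∀ R : Matrix (Fin 2) (Fin 2) ℝ,
      IsHalfIntegral R → R.PosDef →
      (Set.ncard {L : Matrix (Fin 2) (Fin 2) ℝ |
          IsHalfIntegral L ∧ (R - L).PosSemidef ∧ (R + L).PosSemidef} : ℝ) ≤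
        C * R.det ^ ((3 : ℝ) / 2) := by
  refine ⟨72, by norm_num, fun R hR hpd => ?_⟩
  obtain ⟨x, y, z, hRB, hyx, hxz⟩ := exists_intCongruent_reduced hR hpd
  have hx : 0 ≤ x := (abs_nonneg y).trans hyx
  have hdet : (halfInt x y z).det = R.det := hRB.det_eq
  calc ((dominatedSet R).ncard : ℝ)
      ≤ (dominatedSet (halfInt x y z)).ncard := by
        exact_mod_cast hRB.ncard_dominatedSet_le (dominatedSet_finite _)
    _ ≤ (2 * x + 1) * (4 * √(x * z) + 1) * (2 * z + 1) := by
        have hx₀ : 0 ≤ halfInt x y z 0 0 := by simpa [halfInt]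
        have hz₀ : 0 ≤ halfInt x y z 1 1 := by simpa [halfInt] using hx.trans hxz
        simpa [halfInt] using ncard_dominatedSet_le _ hx₀ hz₀
    _ ≤ 72 * R.det ^ ((3 : ℝ) / 2) := by
        rw [← hdet]
        exact box_le_det_rpow_of_reduced hyx hxz (hdet ▸ hpd.det_pos)
end
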